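/- arXiv:1211.3000 — 3 statements merged into one kernel-verified Lean document; each statement's English description precedes it below -/
import Mathlib

section
/- Let l ≥ 1 and for each i with 1 ≤ i ≤ l let m_i ≥ 2 and x_{i,1} ≤ x_{i,2} ≤ … ≤ x_{i,m_i} be positive integers. Define y_i = x_{i,1} + … + x_{i,m_i - 1} for 1 ≤ i ≤ l and y_{l+1} = x_{l,m_l} = 1. Assume that for every i and j we have x_{i,j} ≤ y_{i+1} + … + y_l + y_{l+1}. Let N = y_1 + … + y_l + y_{l+1}. Then for every nonnegative integer z with z ≤ N, there exists a subset Z of the multiset of all the x_{i,j} with 1 ≤ i ≤ l, 1 ≤ j ≤ m_i − 1 (together possibly with x_{l,m_l}) whose elements sum to exactly z. -/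
/-!
Order the elements so that every element is at most one more than the sum of the elements
below it. Adding elements in increasing order keeps the set of subset sums an initial segment
`[0, total]`: if every `z ≤ s` is a subset sum of the old elements and the new element `a`
satisfies `a ≤ s + 1`, then a target in `(s, s + a]` is reached by adding `a` to a subset of sum
`z - a ≤ s`. The blocks of the lemma, ranked by decreasing block index, together with the last
element `1`, have this property by the bound on the `x i j`.
-/

open Finset

section SubsetSum

variable {ι : Type*} (f : ι → ℕ)

theorem exists_subset_sum_eq_insert [DecidableEq ι] {s : Finset ι} {a : ι} (ha : a ∉ s)
    (hs : ∀ z ≤ ∑ i ∈ s, f i, ∃ t ⊆ s, ∑ i ∈ t, f i = z) (hfa : f a ≤ ∑ i ∈ s, f i + 1) :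
    ∀ z ≤ ∑ i ∈ insert a s, f i, ∃ t ⊆ insert a s, ∑ i ∈ t, f i = z := by
  intro z hz
  rw [sum_insert ha] at hz
  by_cases hzs : z ≤ ∑ i ∈ s, f i
  · obtain ⟨t, hts, rfl⟩ := hs z hzs
    exact ⟨t, hts.trans (subset_insert a s), rfl⟩
  · obtain ⟨t, hts, htz⟩ := hs (z - f a) (by omega)
    have hat : a ∉ t := fun h => ha (hts h)
    exact ⟨insert a t, insert_subset_insert a hts, by rw [sum_insert hat, htz]; omega⟩

theorem exists_subset_sum_eq_of_le_sum_lower_add_one {α : Type*} [LinearOrder α] (r : ι → α)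
    (s : Finset ι) (hs : ∀ a ∈ s, f a ≤ ∑ i ∈ s with r i < r a, f i + 1) :
    ∀ z ≤ ∑ i ∈ s, f i, ∃ t ⊆ s, ∑ i ∈ t, f i = z := by
  classical
  induction s using Finset.induction_on_max_value r with
  | empty => exact fun z hz => ⟨∅, empty_subset _, by simp_all⟩
  | insert a s ha hmax ih =>
    have hlower : ∀ b ∈ s, (insert a s).filter (fun i => r i < r b) = s.filter (r · < r b) := by
      intro b hb
      rw [filter_insert, if_neg (hmax b hb).not_gt]
    refine exists_subset_sum_eq_insert f ha (ih fun b hb => ?_) ?_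
    · simpa [hlower b hb] using hs b (mem_insert_of_mem hb)
    · calc f a ≤ ∑ i ∈ insert a s with r i < r a, f i + 1 := hs a (mem_insert_self a s)
        _ ≤ ∑ i ∈ s, f i + 1 := by
          gcongr
          rw [filter_insert, if_neg (lt_irrefl _)]
          exact filter_subset _ s

end SubsetSum

def blockPairs (m : ℕ → ℕ) (I : Finset ℕ) : Finset (ℕ × ℕ) :=
  I.biUnion fun i => {i} ×ˢ Icc 1 (m i - 1)

theorem mem_blockPairs {m : ℕ → ℕ} {I : Finset ℕ} {p : ℕ × ℕ} :
    p ∈ blockPairs m I ↔ p.1 ∈ I ∧ p.2 ∈ Icc 1 (m p.1 - 1) := by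
  obtain ⟨i, j⟩ := p
  simp [blockPairs]

theorem mk_notMem_blockPairs (m : ℕ → ℕ) (I : Finset ℕ) (i : ℕ) :
    (i, m i) ∉ blockPairs m I := by
  simp only [mem_blockPairs, mem_Icc]
  omega

theorem blockPairs_mono (m : ℕ → ℕ) {I J : Finset ℕ} (h : I ⊆ J) :
    blockPairs m I ⊆ blockPairs m J :=
  biUnion_subset_biUnion_of_subset_left _ h

theorem sum_blockPairs {m : ℕ → ℕ} {I : Finset ℕ} {x : ℕ → ℕ → ℕ} {y : ℕ → ℕ}
    (hy : ∀ i ∈ I, y i = ∑ j ∈ Icc 1 (m i - 1), x i j) :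
    ∑ p ∈ blockPairs m I, x p.1 p.2 = ∑ i ∈ I, y i := by
  rw [sum_finset_product' _ I (fun i => Icc 1 (m i - 1)) fun _ => mem_blockPairs]
  exact (sum_congr rfl hy).symm

theorem le_sum_later_blocks_add_one {l : ℕ} {m : ℕ → ℕ} {x : ℕ → ℕ → ℕ} {y : ℕ → ℕ}
    (hy : ∀ i ∈ Icc 1 l, y i = ∑ j ∈ Icc 1 (m i - 1), x i j) (hlast : x l (m l) = 1)
    (hbound : ∀ i ∈ Icc 1 l, ∀ j ∈ Icc 1 (m i), x i j ≤ ∑ k ∈ Icc (i + 1) l, y k + 1) :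
    ∀ p ∈ insert (l, m l) (blockPairs m (Icc 1 l)),
      x p.1 p.2 ≤ ∑ q ∈ insert (l, m l) (blockPairs m (Icc 1 l)) with p.1 < q.1, x q.1 q.2 + 1 := by
  intro p hp
  rcases mem_insert.mp hp with rfl | hp
  · exact hlast.le.trans (Nat.le_add_left 1 _)
  obtain ⟨i, j⟩ := p
  obtain ⟨hi, hj⟩ := mem_blockPairs.mp hp
  have hlater : Icc (i + 1) l ⊆ Icc 1 l := Icc_subset_Icc_left (by omega)
  calc x i j ≤ ∑ k ∈ Icc (i + 1) l, y k + 1 :=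
        hbound i hi j (Icc_subset_Icc_right (Nat.sub_le _ 1) hj)
    _ = ∑ q ∈ blockPairs m (Icc (i + 1) l), x q.1 q.2 + 1 := by
        rw [sum_blockPairs fun k hk => hy k (hlater hk)]
    _ ≤ _ := by
        gcongr
        intro q hq
        have hq₁ := (mem_Icc.mp (mem_blockPairs.mp hq).1).1
        exact mem_filter.mpr ⟨mem_insert_of_mem (blockPairs_mono m hlater hq), by omega⟩

theorem subset_sum_lemma_general
    (l : ℕ)
    (m : ℕ → ℕ)
    (x : ℕ → ℕ → ℕ)
    (y : ℕ → ℕ)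
    (hy : ∀ i ∈ Finset.Icc 1 l, y i = ∑ j ∈ Finset.Icc 1 (m i - 1), x i j)
    (hlast : x l (m l) = 1)
    (hbound : ∀ i ∈ Finset.Icc 1 l, ∀ j ∈ Finset.Icc 1 (m i),
      x i j ≤ (∑ k ∈ Finset.Icc (i + 1) l, y k) + 1)
    (N : ℕ) (hN : N = (∑ i ∈ Finset.Icc 1 l, y i) + 1)
    (z : ℕ) (hz : z ≤ N) :
    ∃ Z : Finset (ℕ × ℕ),
      (∀ p ∈ Z, (1 ≤ p.1 ∧ p.1 ≤ l ∧ 1 ≤ p.2 ∧ p.2 ≤ m p.1 - 1) ∨ p = (l, m l)) ∧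
      ∑ p ∈ Z, x p.1 p.2 = z := by
  have hsum : ∑ p ∈ insert (l, m l) (blockPairs m (Icc 1 l)), x p.1 p.2 = N := by
    rw [sum_insert (mk_notMem_blockPairs m _ l), sum_blockPairs hy, hlast, hN, add_comm]
  -- ranking by `toDual p.1` puts the later blocks below the earlier ones
  obtain ⟨Z, hZS, hZz⟩ := exists_subset_sum_eq_of_le_sum_lower_add_one
    (fun p : ℕ × ℕ => x p.1 p.2) (fun p : ℕ × ℕ => OrderDual.toDual p.1) _
    (le_sum_later_blocks_add_one hy hlast hbound) z (hsum.symm ▸ hz)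
  refine ⟨Z, fun p hp => ?_, hZz⟩
  rcases mem_insert.mp (hZS hp) with h | h
  · exact Or.inr h
  · simp only [mem_blockPairs, mem_Icc] at h
    exact Or.inl ⟨h.1.1, h.1.2, h.2⟩

/-- Subset-sum lemma (Lemma in the paper): given blocks of positive integers
`x i 1 ≤ … ≤ x i (m i)` for `1 ≤ i ≤ l`, with `y i = x i 1 + … + x i (m i - 1)`,
`x l (m l) = 1`, and each `x i j` bounded by `y (i+1) + … + y l + 1`,
every `z ≤ N = y 1 + … + y l + 1` is the sum of a subset of the multiset of
the `x i j` with `1 ≤ j ≤ m i - 1` together possibly with `x l (m l)`. -/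
theorem subset_sum_lemma
    (l : ℕ) (hl : 1 ≤ l)
    (m : ℕ → ℕ) (hm : ∀ i ∈ Finset.Icc 1 l, 2 ≤ m i)
    (x : ℕ → ℕ → ℕ)
    (hpos : ∀ i ∈ Finset.Icc 1 l, ∀ j ∈ Finset.Icc 1 (m i), 0 < x i j)
    (hmono : ∀ i ∈ Finset.Icc 1 l, ∀ j j', 1 ≤ j → j ≤ j' → j' ≤ m i → x i j ≤ x i j')
    (y : ℕ → ℕ)
    (hy : ∀ i ∈ Finset.Icc 1 l, y i = ∑ j ∈ Finset.Icc 1 (m i - 1), x i j)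
    (hlast : x l (m l) = 1)
    (hbound : ∀ i ∈ Finset.Icc 1 l, ∀ j ∈ Finset.Icc 1 (m i),
      x i j ≤ (∑ k ∈ Finset.Icc (i + 1) l, y k) + 1)
    (N : ℕ) (hN : N = (∑ i ∈ Finset.Icc 1 l, y i) + 1)
    (z : ℕ) (hz : z ≤ N) :
    ∃ Z : Finset (ℕ × ℕ),
      (∀ p ∈ Z, (1 ≤ p.1 ∧ p.1 ≤ l ∧ 1 ≤ p.2 ∧ p.2 ≤ m p.1 - 1) ∨ p = (l, m l)) ∧
      ∑ p ∈ Z, x p.1 p.2 = z :=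
  subset_sum_lemma_general l m x y hy hlast hbound N hN z hz
end

section
/- In the greedy procedure from the subset-sum lemma (processing the x_{i,j} in the order x_{1,1},…,x_{1,m_1-1},x_{2,1},…,x_{l,m_l-1}, adding an element to Z whenever the running sum plus the element does not exceed z), after processing all elements of block i the running sum lies in the interval [z − (y_{i+1}+…+y_{l+1}), z]. -/
/-! The greedy sum can only fall short of `z` by less than the first element it rejects. Block `i`
has total `y i`, and each of its elements is at most `y (i+1) + … + y l + 1`; so if the sum before
block `i` is within `y i + … + y l + 1` of `z`, then either the whole block is accepted, or some
element is rejected and the sum afterwards is within `y (i+1) + … + y l + 1` of `z`. -/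

/-- The running sum of the greedy procedure with cap `z`, processing a list of
elements in order, adding each element iff the sum stays `≤ z`. -/
def greedySum (z : ℕ) (L : List ℕ) : ℕ :=
  L.foldl (fun s a => if s + a ≤ z then s + a else s) 0

/-- The list of elements of blocks `1, …, i` in order:
`x 1 1, …, x 1 (m 1 - 1), x 2 1, …, x i (m i - 1)`. -/
def blockPrefix (m : ℕ → ℕ) (x : ℕ → ℕ → ℕ) (i : ℕ) : List ℕ :=
  ((List.range i).map (fun k => (List.range (m (k + 1) - 1)).map
    (fun j => x (k + 1) (j + 1)))).flatten

open Finset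

def greedyFrom (z s : ℕ) (L : List ℕ) : ℕ :=
  L.foldl (fun s a => if s + a ≤ z then s + a else s) s

section Greedy

variable {z : ℕ}

theorem greedySum_eq_greedyFrom (L : List ℕ) : greedySum z L = greedyFrom z 0 L := rfl

theorem greedyFrom_append (s : ℕ) (L₁ L₂ : List ℕ) :
    greedyFrom z s (L₁ ++ L₂) = greedyFrom z (greedyFrom z s L₁) L₂ :=
  List.foldl_append

theorem le_greedyFrom : ∀ (s : ℕ) (L : List ℕ), s ≤ greedyFrom z s L
  | _, [] => le_rfl
  | s, a :: L => by
      refine le_trans ?_ (le_greedyFrom _ L)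
      dsimp only
      split <;> omega

theorem greedyFrom_le : ∀ {s : ℕ} (L : List ℕ), s ≤ z → greedyFrom z s L ≤ z
  | _, [], hs => hs
  | s, a :: L, hs => greedyFrom_le (s := if s + a ≤ z then s + a else s) L (by split <;> omega)

theorem greedySum_le (L : List ℕ) : greedySum z L ≤ z :=
  greedyFrom_le L (Nat.zero_le z)

theorem le_greedyFrom_add {c : ℕ} :
    ∀ {s : ℕ} (L : List ℕ), (∀ a ∈ L, a ≤ c) → z ≤ s + L.sum + c → z ≤ greedyFrom z s L + c
  | _, [], _, hz => by simpa [greedyFrom] using hz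
  | s, a :: L, hL, hz => by
      have ha : a ≤ c := hL a List.mem_cons_self
      have hL' : ∀ b ∈ L, b ≤ c := fun b hb => hL b (List.mem_cons_of_mem a hb)
      by_cases hacc : s + a ≤ z
      · have := le_greedyFrom_add (s := s + a) L hL' (by simp only [List.sum_cons] at hz; omega)
        simpa [greedyFrom, hacc] using this
      · have := le_greedyFrom (z := z) s L
        simp only [greedyFrom, List.foldl_cons, if_neg hacc] at this ⊢
        omega

end Greedy

section Blocks

variable (m : ℕ → ℕ) (x : ℕ → ℕ → ℕ)

def block (i : ℕ) : List ℕ :=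
  (List.range (m i - 1)).map (fun j => x i (j + 1))

theorem blockPrefix_succ (i : ℕ) :
    blockPrefix m x (i + 1) = blockPrefix m x i ++ block m x (i + 1) := by
  simp [blockPrefix, block, List.range_succ]

theorem sum_block (i : ℕ) : (block m x i).sum = ∑ j ∈ Icc 1 (m i - 1), x i j := by
  rw [← Ico_add_one_right_eq_Icc, sum_Ico_eq_sum_range, Nat.add_sub_cancel]
  simp only [block, add_comm 1]
  rfl

theorem mem_block {i a : ℕ} : a ∈ block m x i ↔ ∃ j ∈ Icc 1 (m i - 1), x i j = a := by
  simp only [block, List.mem_map, List.mem_range, mem_Icc]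
  constructor
  · rintro ⟨j, hj, rfl⟩
    exact ⟨j + 1, ⟨by omega, by omega⟩, rfl⟩
  · rintro ⟨j, ⟨hj1, hj⟩, rfl⟩
    exact ⟨j - 1, by omega, by rw [Nat.sub_add_cancel hj1]⟩

end Blocks

theorem sum_Icc_eq_add_sum_Icc {y : ℕ → ℕ} {a b : ℕ} (h : a ≤ b) :
    ∑ k ∈ Icc a b, y k = y a + ∑ k ∈ Icc (a + 1) b, y k := by
  rw [Icc_eq_cons_Ioc h, sum_cons, Icc_add_one_left_eq_Ioc]

theorem le_greedySum_blockPrefix_add {l z : ℕ} {m y : ℕ → ℕ} {x : ℕ → ℕ → ℕ}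
    (hy : ∀ i ∈ Icc 1 l, y i = ∑ j ∈ Icc 1 (m i - 1), x i j)
    (hbound : ∀ i ∈ Icc 1 l, ∀ j ∈ Icc 1 (m i), x i j ≤ (∑ k ∈ Icc (i + 1) l, y k) + 1)
    (hz : z ≤ (∑ i ∈ Icc 1 l, y i) + 1) :
    ∀ i ≤ l, z ≤ greedySum z (blockPrefix m x i) + ((∑ k ∈ Icc (i + 1) l, y k) + 1)
  | 0, _ => by simpa [greedySum, blockPrefix] using hz
  | i + 1, hi => by
      have hi' : i + 1 ∈ Icc 1 l := mem_Icc.2 ⟨by omega, hi⟩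
      have ih := le_greedySum_blockPrefix_add hy hbound hz i (by omega)
      rw [sum_Icc_eq_add_sum_Icc hi] at ih
      rw [blockPrefix_succ, greedySum_eq_greedyFrom, greedyFrom_append, ← greedySum_eq_greedyFrom]
      refine le_greedyFrom_add _ (fun a ha => ?_) ?_
      · obtain ⟨j, hj, rfl⟩ := (mem_block m x).1 ha
        exact hbound (i + 1) hi' j (Icc_subset_Icc_right (Nat.sub_le _ _) hj)
      · rw [sum_block, ← hy (i + 1) hi']
        omega

theorem greedy_invariant_general
    (l : ℕ)
    (m : ℕ → ℕ)
    (x : ℕ → ℕ → ℕ)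
    (y : ℕ → ℕ)
    (hy : ∀ i ∈ Finset.Icc 1 l, y i = ∑ j ∈ Finset.Icc 1 (m i - 1), x i j)
    (hbound : ∀ i ∈ Finset.Icc 1 l, ∀ j ∈ Finset.Icc 1 (m i),
      x i j ≤ (∑ k ∈ Finset.Icc (i + 1) l, y k) + 1)
    (N : ℕ) (hN : N = (∑ i ∈ Finset.Icc 1 l, y i) + 1)
    (z : ℕ) (hz : z ≤ N) :
    ∀ i ∈ Finset.Icc 1 l,
      z - ((∑ k ∈ Finset.Icc (i + 1) l, y k) + 1) ≤ greedySum z (blockPrefix m x i) ∧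
      greedySum z (blockPrefix m x i) ≤ z := by
  intro i hi
  exact ⟨tsub_le_iff_right.2 (le_greedySum_blockPrefix_add hy hbound (hN ▸ hz) i (mem_Icc.1 hi).2),
    greedySum_le _⟩

/-- Greedy invariant: in the setting of the subset-sum lemma, after processing the
elements of blocks `1, …, i` the greedy running sum lies in
`[z − (y (i+1) + … + y l + 1), z]`. -/
theorem greedy_invariant
    (l : ℕ) (hl : 1 ≤ l)
    (m : ℕ → ℕ) (hm : ∀ i ∈ Finset.Icc 1 l, 2 ≤ m i)
    (x : ℕ → ℕ → ℕ)
    (hpos : ∀ i ∈ Finset.Icc 1 l, ∀ j ∈ Finset.Icc 1 (m i), 0 < x i j)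
    (hmono : ∀ i ∈ Finset.Icc 1 l, ∀ j j', 1 ≤ j → j ≤ j' → j' ≤ m i → x i j ≤ x i j')
    (y : ℕ → ℕ)
    (hy : ∀ i ∈ Finset.Icc 1 l, y i = ∑ j ∈ Finset.Icc 1 (m i - 1), x i j)
    (hlast : x l (m l) = 1)
    (hbound : ∀ i ∈ Finset.Icc 1 l, ∀ j ∈ Finset.Icc 1 (m i),
      x i j ≤ (∑ k ∈ Finset.Icc (i + 1) l, y k) + 1)
    (N : ℕ) (hN : N = (∑ i ∈ Finset.Icc 1 l, y i) + 1)
    (z : ℕ) (hz : z ≤ N) :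
    ∀ i ∈ Finset.Icc 1 l,
      z - ((∑ k ∈ Finset.Icc (i + 1) l, y k) + 1) ≤ greedySum z (blockPrefix m x i) ∧
      greedySum z (blockPrefix m x i) ≤ z :=
  greedy_invariant_general l m x y hy hbound N hN z hz
end

section
/- Let d ≥ 1, n ≥ 1 and let G_d(n) be the d-dimensional grid graph on vertex set {0,…,n−1}^d, where two vertices are adjacent iff they differ in exactly one coordinate and there by exactly 1. Let 1/2 ≤ α < 1. If C is a set of vertices such that every connected component of G_d(n) with C removed has at most α·n^d vertices, then |C| ≥ (1−α)·n^{d−1}/d. -/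
/-- The grid graph on the box `∏ i, {0, …, r i − 1}`: two vertices are adjacent
iff they differ in exactly one coordinate and there by exactly 1. -/
def boxGraph {d : ℕ} (r : Fin d → ℕ) : SimpleGraph ((i : Fin d) → Fin (r i)) where
  Adj v w := ∃ k, (∀ j, j ≠ k → v j = w j) ∧
    ((v k : ℕ) + 1 = (w k : ℕ) ∨ (w k : ℕ) + 1 = (v k : ℕ))
  symm := by
    refine ⟨?_⟩
    rintro v w ⟨k, h1, h2⟩
    exact ⟨k, fun j hj => (h1 j hj).symm, h2.symm⟩
  loopless := by
    refine ⟨?_⟩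
    rintro v ⟨k, _, h2⟩
    omega

/-- The `d`-dimensional grid graph `G_d(n)` on `{0, …, n−1}^d`. -/
def gridGraph (d n : ℕ) : SimpleGraph ((_ : Fin d) → Fin n) :=
  boxGraph (fun _ => n)

/-- The graph `G` with the vertices of `C` avoided: edges of `G` with both
endpoints outside `C`. Its reachability classes on `Cᶜ` are the connected
components of `G` with `C` removed. -/
def avoidGraph {V : Type*} (G : SimpleGraph V) (C : Set V) : SimpleGraph V where
  Adj a b := G.Adj a b ∧ a ∉ C ∧ b ∉ C
  symm := ⟨fun _ _ ⟨h, ha, hb⟩ => ⟨h.symm, hb, ha⟩⟩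
  loopless := ⟨fun _ ⟨h, _, _⟩ => G.irrefl h⟩


/-!
Call a vertex `i`-mixed for `S` if the line through it in direction `i` meets both `S` and `Sᶜ`.
Slicing along the first coordinate proves, by induction on `d`, the isoperimetric inequality
`2 min(|S|, |Sᶜ|) ≤ ∑ᵢ |mixedᵢ(S)|`: the layers of `S` differ in size by at most the number `M`
of mixed lines in direction `0`, and for sizes varying that little the loss
`min(∑ aₜ, ∑ bₜ) - ∑ min(aₜ, bₜ)` is at most `n M / 2`.

If `S` is a union of components of the grid with `C` removed, every mixed line meets `C`, so
`∑ᵢ |mixedᵢ(S)| ≤ d n |C|`. Adding components of size at most `α nᵈ` one at a time either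
absorbs all of `Cᶜ` while staying below `(1 - α) nᵈ / 2`, and then `C` is large outright, or
produces such an `S` with `|S|` and `|Sᶜ|` both at least `(1 - α) nᵈ / 2`, and then
`(1 - α) nᵈ ≤ d n |C|`.
-/

open Finset Function SimpleGraph

section Arithmetic
variable {ι R : Type*} [Fintype ι] [CommRing R] [LinearOrder R] [IsStrictOrderedRing R]

theorem two_mul_min_sum_posPart_sum_negPart_le {x : ι → R} {M : R}
    (hx : ∀ s t, x s - x t ≤ 2 * M) :
    2 * min (∑ t, (x t)⁺) (∑ t, (x t)⁻) ≤ Fintype.card ι * M := by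
  rcases isEmpty_or_nonempty ι with hι | hι
  · simp
  obtain ⟨t₀, -, ht₀⟩ := exists_min_image univ x univ_nonempty
  have hM : 0 ≤ Fintype.card ι * M := mul_nonneg (Nat.cast_nonneg _) (by linarith [hx t₀ t₀])
  set U := ∑ t, (x t)⁺
  set V := ∑ t, (x t)⁻
  set A := x t₀ + 2 * M
  set B := -x t₀
  have hxA : ∀ t, x t ≤ A := fun t => by linarith [hx t t₀]
  have hxB : ∀ t, -x t ≤ B := fun t => by linarith [ht₀ t (mem_univ t)]
  rcases le_or_gt A 0 with hA | hA
  · have hU : U = 0 := sum_eq_zero fun t _ => posPart_eq_zero.2 ((hxA t).trans hA)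
    simpa [hU, V, sum_nonneg] using hM
  rcases le_or_gt B 0 with hB | hB
  · have hV : V = 0 := sum_eq_zero fun t _ => negPart_eq_zero.2 (by linarith [hxB t])
    simpa [hV, U, sum_nonneg] using hM
  -- Every `x t` lies in `[-B, A]`, so weighting positive parts by `B` and negative parts by `A`
  -- gives `(A + B) * min U V ≤ B * U + A * V ≤ card ι * A * B ≤ card ι * (A + B) ^ 2 / 4`.
  have hterm : ∀ t, B * (x t)⁺ + A * (x t)⁻ ≤ A * B := fun t => by
    rcases le_total 0 (x t) with h | h
    · rw [posPart_of_nonneg h, negPart_of_nonneg h]; nlinarith [hxA t]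
    · rw [posPart_of_nonpos h, negPart_of_nonpos h]; nlinarith [hxB t]
  have hsum : B * U + A * V ≤ Fintype.card ι * (A * B) := by
    rw [mul_sum, mul_sum, ← sum_add_distrib]
    simpa using sum_le_card_nsmul univ _ _ fun t _ => hterm t
  have hmin : (A + B) * min U V ≤ B * U + A * V := by
    nlinarith [min_le_left U V, min_le_right U V]
  have hAB : A + B = 2 * M := by ring
  nlinarith [sq_nonneg (A - B)]

theorem two_mul_min_sum_le {a b : ι → R} {M : R} (ha : ∀ s t, a s - a t ≤ M)
    (hb : ∀ s t, b s - b t ≤ M) :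
    2 * min (∑ t, a t) (∑ t, b t) ≤ Fintype.card ι * M + 2 * ∑ t, min (a t) (b t) := by
  have hx : ∀ s t, (a s - b s) - (a t - b t) ≤ 2 * M := fun s t => by linarith [ha s t, hb t s]
  have hmin_a : ∀ t, min (a t) (b t) = a t - (a t - b t)⁺ := fun t => inf_eq_sub_posPart_sub _ _
  have hmin_b : ∀ t, min (a t) (b t) = b t - (a t - b t)⁻ := fun t => by
    linarith [hmin_a t, posPart_sub_negPart (a t - b t)]
  have hsplit : min (∑ t, a t) (∑ t, b t) =
      ∑ t, min (a t) (b t) + min (∑ t, (a t - b t)⁺) (∑ t, (a t - b t)⁻) := by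
    rw [← min_add_add_left]
    congr 1
    · simp only [hmin_a, sum_sub_distrib, sub_add_cancel]
    · simp only [hmin_b, sum_sub_distrib, sub_add_cancel]
  linarith [two_mul_min_sum_posPart_sum_negPart_le hx]

end Arithmetic

theorem SimpleGraph.exists_reachable_closed_covering_or_card_mem_Ico {V : Type*} [Fintype V]
    (G : SimpleGraph V) (X : Finset V) {β L : ℝ} (hL : 0 < L)
    (hX : ∀ v ∈ X, ({w | G.Reachable v w} : Set V).ncard ≤ β) :
    ∃ S : Finset V, (∀ u ∈ S, ∀ w, G.Reachable u w → w ∈ S) ∧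
      (X ⊆ S ∧ #S < L ∨ (#S : ℝ) ∈ Set.Ico L (L + β)) := by
  classical
  induction X using Finset.induction_on with
  | empty => exact ⟨∅, by simp, Or.inl ⟨subset_refl _, by simpa⟩⟩
  | insert v X _ ih =>
    obtain ⟨S, hS, ⟨hXS, hSL⟩ | hLS⟩ := ih fun u hu => hX u (mem_insert_of_mem hu)
    · by_cases hvS : v ∈ S
      · exact ⟨S, hS, Or.inl ⟨insert_subset hvS hXS, hSL⟩⟩
      set K : Finset V := {w | G.Reachable v w}
      have mem_K : ∀ w, w ∈ K ↔ G.Reachable v w := by simp [K]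
      have hK : (#K : ℝ) ≤ β := by
        simpa [K, ← Set.ncard_coe_finset] using hX v (mem_insert_self v X)
      have hSK : Disjoint S K :=
        Finset.disjoint_left.2 fun u huS huK => hvS (hS u huS v ((mem_K u).1 huK).symm)
      have hclosed : ∀ u ∈ S ∪ K, ∀ w, G.Reachable u w → w ∈ S ∪ K := by
        intro u hu w huw
        rcases mem_union.1 hu with hu | hu
        · exact mem_union_left _ (hS u hu w huw)
        · exact mem_union_right _ ((mem_K w).2 (((mem_K u).1 hu).trans huw))
      have hcard : (#(S ∪ K) : ℝ) = #S + #K := by rw [card_union_of_disjoint hSK, Nat.cast_add]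
      refine ⟨S ∪ K, hclosed, ?_⟩
      rcases lt_or_ge (#(S ∪ K) : ℝ) L with h | h
      · have hvK : v ∈ S ∪ K := mem_union_right _ ((mem_K v).2 .rfl)
        exact Or.inl ⟨insert_subset hvK (hXS.trans subset_union_left), h⟩
      · exact Or.inr ⟨h, by linarith⟩
    · exact ⟨S, hS, Or.inr hLS⟩

section Isoperimetry
variable {n d : ℕ}

def mixedAlong (i : Fin d) (S : Finset (Fin d → Fin n)) : Finset (Fin d → Fin n) :=
  {v | (∃ a, update v i a ∈ S) ∧ ∃ a, update v i a ∉ S}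

def layer (S : Finset (Fin (d + 1) → Fin n)) (t : Fin n) : Finset (Fin d → Fin n) :=
  {g | Fin.cons t g ∈ S}

def mixedLines (S : Finset (Fin (d + 1) → Fin n)) : Finset (Fin d → Fin n) :=
  {g | (∃ t, Fin.cons t g ∈ S) ∧ ∃ t, Fin.cons t g ∉ S}

@[simp]
theorem mem_layer {S : Finset (Fin (d + 1) → Fin n)} {t : Fin n} {g : Fin d → Fin n} :
    g ∈ layer S t ↔ Fin.cons t g ∈ S := by
  simp [layer]

theorem card_eq_sum_card_layer (S : Finset (Fin (d + 1) → Fin n)) :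
    #S = ∑ t, #(layer S t) := by
  simp only [layer, card_filter]
  rw [← Fintype.sum_prod_type']
  calc #S = ∑ v, if v ∈ S then 1 else 0 := by simp
    _ = _ := (Fintype.sum_equiv (Fin.consEquiv fun _ => Fin n) _ _ fun _ => rfl).symm

theorem layer_compl (S : Finset (Fin (d + 1) → Fin n)) (t : Fin n) :
    layer Sᶜ t = (layer S t)ᶜ := by
  ext; simp

theorem mixedLines_compl (S : Finset (Fin (d + 1) → Fin n)) : mixedLines Sᶜ = mixedLines S := by
  ext; simp [mixedLines, and_comm]

theorem card_layer_le_card_layer_add (S : Finset (Fin (d + 1) → Fin n)) (s t : Fin n) :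
    #(layer S s) ≤ #(layer S t) + #(mixedLines S) := by
  refine (card_le_card_sdiff_add_card (t := layer S t)).trans ?_
  rw [add_comm]
  gcongr
  intro g hg
  simp only [mem_sdiff, mem_layer] at hg
  simpa [mixedLines] using ⟨⟨s, hg.1⟩, t, hg.2⟩

theorem layer_mixedAlong_zero (S : Finset (Fin (d + 1) → Fin n)) (t : Fin n) :
    layer (mixedAlong 0 S) t = mixedLines S := by
  ext; simp [mixedAlong, mixedLines, Fin.update_cons_zero]

theorem layer_mixedAlong_succ (S : Finset (Fin (d + 1) → Fin n)) (j : Fin d) (t : Fin n) :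
    layer (mixedAlong j.succ S) t = mixedAlong j (layer S t) := by
  ext; simp [mixedAlong, ← Fin.cons_update]

theorem card_mixedAlong_zero (S : Finset (Fin (d + 1) → Fin n)) :
    #(mixedAlong 0 S) = n * #(mixedLines S) := by
  simp [card_eq_sum_card_layer (mixedAlong 0 S), layer_mixedAlong_zero]

theorem card_mixedAlong_succ (S : Finset (Fin (d + 1) → Fin n)) (j : Fin d) :
    #(mixedAlong j.succ S) = ∑ t, #(mixedAlong j (layer S t)) := by
  simp [card_eq_sum_card_layer (mixedAlong j.succ S), layer_mixedAlong_succ]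

theorem two_mul_min_card_le_sum_card_mixedAlong :
    ∀ {d : ℕ} (S : Finset (Fin d → Fin n)), 2 * min #S #Sᶜ ≤ ∑ i, #(mixedAlong i S)
  | 0, S => by
    have : #S + #Sᶜ = 1 := by rw [card_add_card_compl]; simp
    have : min #S #Sᶜ = 0 := by omega
    simp [this]
  | d + 1, S => by
    have hlayers := two_mul_min_sum_le (R := ℤ) (M := #(mixedLines S))
      (a := fun t => #(layer S t)) (b := fun t => #(layer Sᶜ t))
      (fun s t => by linarith [card_layer_le_card_layer_add S s t])
      (fun s t => by linarith [mixedLines_compl S ▸ card_layer_le_card_layer_add Sᶜ s t])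
    rw [card_eq_sum_card_layer S, card_eq_sum_card_layer Sᶜ, Fin.sum_univ_succ,
      card_mixedAlong_zero]
    simp only [card_mixedAlong_succ, layer_compl, Fintype.card_fin] at hlayers ⊢
    rw [sum_comm]
    calc 2 * min (∑ t, #(layer S t)) (∑ t, #(layer S t)ᶜ)
        ≤ n * #(mixedLines S) + ∑ t, 2 * min #(layer S t) #(layer S t)ᶜ := by
          rw [← mul_sum]; exact_mod_cast hlayers
      _ ≤ _ := by
          gcongr with t
          exact two_mul_min_card_le_sum_card_mixedAlong (layer S t)

end Isoperimetry

section Separator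
variable {d n : ℕ} {C S : Finset (Fin d → Fin n)}

theorem gridGraph_adj_update (v : Fin d → Fin n) (i : Fin d) {a b : Fin n}
    (h : (pathGraph n).Adj a b) : (gridGraph d n).Adj (update v i a) (update v i b) :=
  ⟨i, fun j hj => by simp [update_of_ne hj], by simpa [pathGraph_adj] using h⟩

theorem exists_update_mem_of_mem_mixedAlong
    (hS : ∀ u ∈ S, ∀ w, (avoidGraph (gridGraph d n) C).Reachable u w → w ∈ S)
    {i : Fin d} {v : Fin d → Fin n} (hv : v ∈ mixedAlong i S) : ∃ a, update v i a ∈ C := by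
  obtain ⟨⟨a, ha⟩, b, hb⟩ := by simpa [mixedAlong] using hv
  by_contra! hC
  let line : pathGraph n →g avoidGraph (gridGraph d n) C :=
    ⟨fun a => update v i a, fun h => ⟨gridGraph_adj_update v i h, by simpa using hC _,
      by simpa using hC _⟩⟩
  exact hb (hS _ ha _ ((pathGraph_preconnected n a b).map line))

theorem card_mixedAlong_le
    (hS : ∀ u ∈ S, ∀ w, (avoidGraph (gridGraph d n) C).Reachable u w → w ∈ S) (i : Fin d) :
    #(mixedAlong i S) ≤ n * #C := by
  have hsub : mixedAlong i S ⊆ C.biUnion fun c => univ.image (update c i) := fun v hv => by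
    obtain ⟨a, ha⟩ := exists_update_mem_of_mem_mixedAlong hS hv
    exact mem_biUnion.2 ⟨_, ha, mem_image.2 ⟨v i, mem_univ _, by simp⟩⟩
  calc #(mixedAlong i S) ≤ ∑ c ∈ C, #(univ.image (update c i)) :=
        (card_le_card hsub).trans card_biUnion_le
    _ ≤ ∑ _c ∈ C, n := sum_le_sum fun c _ => card_image_le.trans (by simp)
    _ = n * #C := by rw [sum_const, smul_eq_mul, mul_comm]

end Separator

theorem one_sub_mul_pow_le_of_separator {d n : ℕ} (hd : 1 ≤ d) (hn : 1 ≤ n) {α : ℝ}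
    (hα1 : 1 / 2 ≤ α) (hα2 : α < 1) (C : Finset (Fin d → Fin n))
    (hsep : ∀ v ∉ C,
      ({w | (avoidGraph (gridGraph d n) C).Reachable v w} : Set _).ncard ≤ α * (n : ℝ) ^ d) :
    (1 - α) * (n : ℝ) ^ d ≤ d * (n * #C) := by
  have hN : ∀ S : Finset (Fin d → Fin n), (#S : ℝ) + #Sᶜ = (n : ℝ) ^ d := fun S => by
    rw [← Nat.cast_add, card_add_card_compl]; simp
  obtain ⟨S, hS, ⟨hCS, hSL⟩ | ⟨hLS, hSL⟩⟩ :=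
    (avoidGraph (gridGraph d n) C).exists_reachable_closed_covering_or_card_mem_Ico Cᶜ
      (L := (1 - α) * n ^ d / 2) (by positivity) fun v hv => hsep v (by simpa using hv)
  · have hCc : (#Cᶜ : ℝ) ≤ #S := by exact_mod_cast card_le_card hCS
    have hdn : (1 : ℝ) ≤ d * n := by exact_mod_cast Nat.one_le_iff_ne_zero.2 (by positivity)
    nlinarith [hN C, mul_le_mul_of_nonneg_right hdn (by positivity : (0 : ℝ) ≤ #C)]
  · have hiso : 2 * min (#S : ℝ) #Sᶜ ≤ d * (n * #C) := by
      have := (two_mul_min_card_le_sum_card_mixedAlong S).trans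
        (sum_le_card_nsmul univ _ _ fun i _ => card_mixedAlong_le hS i)
      simp only [card_univ, Fintype.card_fin, smul_eq_mul] at this
      exact_mod_cast this
    have hSc : (1 - α) * (n : ℝ) ^ d / 2 ≤ #Sᶜ := by linarith [hN S]
    linarith [le_min hLS hSc]

/-- Theorem 4 (separator theorem for grids): for `1/2 ≤ α < 1`, any
`α`-separator of `G_d(n)` has cardinality at least `(1−α)·n^{d−1}/d`. -/
theorem grid_separator_lower_bound
    (d n : ℕ) (hd : 1 ≤ d) (hn : 1 ≤ n)
    (α : ℝ) (hα1 : 1 / 2 ≤ α) (hα2 : α < 1)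
    (C : Finset ((_ : Fin d) → Fin n))
    (hsep : ∀ v ∉ C,
      ({w | (avoidGraph (gridGraph d n) ↑C).Reachable v w} : Set _).ncard
        ≤ α * (n : ℝ) ^ d) :
    (1 - α) * (n : ℝ) ^ (d - 1) / d ≤ (C.card : ℝ) := by
  have key := one_sub_mul_pow_le_of_separator hd hn hα1 hα2 C hsep
  have hd' : (0 : ℝ) < d := by exact_mod_cast hd
  have hn' : (0 : ℝ) < n := by exact_mod_cast hn
  rw [div_le_iff₀ hd', ← mul_le_mul_iff_of_pos_right hn', mul_assoc, ← pow_succ,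
    Nat.sub_add_cancel hd]
  linarith
end
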